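/- Let γ > 0, S = {(x, −γ|x|) : x ∈ ℝ} and α = arctan γ. If (z, w) ∈ ℝ² satisfies w ≥ 0 and the point of S nearest to (z, w) is the origin, then the squared distance from (z, w) to S is z² + w², and z² ≤ sin²α·(z + cot α·sgn(z)·w)². In particular the squared distance from (z, w) to the vertical half-line {(0,y) : y ≥ 0}, which is z², is at most sin²α·(z + cot α·sgn(z)·w)². -/

import Mathlib

open Real

noncomputable def pt (a b : ℝ) : EuclideanSpace ℝ (Fin 2) := WithLp.toLp 2 ![a, b]

/-- The wedge `S = {(x, −γ|x|) : x ∈ ℝ}`. -/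
def wedge (γ : ℝ) : Set (EuclideanSpace ℝ (Fin 2)) := {p | ∃ x : ℝ, p = pt x (-(γ * |x|))}

/-- The half-line `{(0, y) : y ≥ 0}`. -/
def halfLine : Set (EuclideanSpace ℝ (Fin 2)) := {p | p 0 = 0 ∧ 0 ≤ p 1}

lemma dist_pt (a b c d : ℝ) : dist (pt a b) (pt c d) = Real.sqrt ((a-c)^2+(b-d)^2) := by
  rw [EuclideanSpace.dist_eq]
  simp [pt, Fin.sum_univ_two, Real.dist_eq, sq_abs]

lemma le_infDist' {x : EuclideanSpace ℝ (Fin 2)} {s : Set (EuclideanSpace ℝ (Fin 2))}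
    (hs : s.Nonempty) {b : ℝ} (h : ∀ y ∈ s, b ≤ dist x y) : b ≤ Metric.infDist x s := by
  by_contra hlt
  push_neg at hlt
  obtain ⟨y, hy, hl⟩ := (Metric.infDist_lt_iff hs).mp hlt
  exact absurd (h y hy) (not_le.mpr hl)

lemma eta2 (p : EuclideanSpace ℝ (Fin 2)) : p = pt (p 0) (p 1) := by
  ext i; fin_cases i <;> simp [pt]

theorem stmt_2 (γ z w : ℝ) (hγ : 0 < γ) (hw : 0 ≤ w)
    (hnear : ∀ q ∈ wedge γ, dist (pt z w) (pt 0 0) ≤ dist (pt z w) q) :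
    (Metric.infDist (pt z w) (wedge γ)) ^ 2 = z ^ 2 + w ^ 2 ∧
    (Metric.infDist (pt z w) halfLine) ^ 2 = z ^ 2 ∧
    z ^ 2 ≤ Real.sin (Real.arctan γ) ^ 2
        * (z + (Real.cos (Real.arctan γ) / Real.sin (Real.arctan γ)) * Real.sign z * w) ^ 2 := by
  have hγ2 : (0:ℝ) < 1 + γ^2 := by positivity
  have h0mem : pt 0 0 ∈ wedge γ := ⟨0, by simp⟩
  have hd00 : dist (pt z w) (pt 0 0) = Real.sqrt (z^2 + w^2) := by
    rw [dist_pt]; ring_nf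
  refine ⟨?_, ?_, ?_⟩
  · have h1 : Metric.infDist (pt z w) (wedge γ) = Real.sqrt (z^2 + w^2) := by
      apply le_antisymm
      · calc Metric.infDist (pt z w) (wedge γ) ≤ dist (pt z w) (pt 0 0) :=
              Metric.infDist_le_dist_of_mem h0mem
          _ = _ := hd00
      · refine le_infDist' ⟨_, h0mem⟩ (fun q hq => ?_)
        rw [← hd00]; exact hnear q hq
    rw [h1, Real.sq_sqrt (by positivity)]
  · have hmem : pt 0 w ∈ halfLine := ⟨by simp [pt], by simpa [pt] using hw⟩
    have h2 : Metric.infDist (pt z w) halfLine = |z| := by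
      apply le_antisymm
      · calc Metric.infDist (pt z w) halfLine ≤ dist (pt z w) (pt 0 w) :=
              Metric.infDist_le_dist_of_mem hmem
          _ = |z| := by
              rw [dist_pt]
              rw [show (z-0)^2 + (w-w)^2 = z^2 by ring, Real.sqrt_sq_eq_abs]
      · refine le_infDist' ⟨_, hmem⟩ (fun q hq => ?_)
        rw [eta2 q, dist_pt, hq.1]
        calc |z| = Real.sqrt (z^2) := (Real.sqrt_sq_eq_abs z).symm
          _ ≤ _ := Real.sqrt_le_sqrt (by nlinarith [sq_nonneg (w - q 1)])
    rw [h2, sq_abs]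
  · -- key inequality from hnear
    have key : ∀ x : ℝ, z^2 + w^2 ≤ (z-x)^2 + (w + γ*|x|)^2 := by
      intro x
      have h := hnear (pt x (-(γ*|x|))) ⟨x, rfl⟩
      rw [hd00, dist_pt] at h
      have h' := (Real.sqrt_le_sqrt_iff (by positivity)).mp h
      nlinarith [h']
    have habs : |z| ≤ γ * w := by
      rcases eq_or_ne z 0 with hz | hz
      · simp [hz]; positivity
      · by_contra hcon
        push_neg at hcon
        have ha : 0 < |z| := abs_pos.mpr hz
        set d := |z| - γ * w with hdd
        have hd : 0 < d := by simp [hdd]; linarith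
        set t := d / (|z| * (1 + γ^2)) with htdef
        have ht : 0 < t := by positivity
        have hk := key (t * z)
        have habs' : |t * z| = t * |z| := by
          rw [abs_mul, abs_of_pos ht]
        rw [habs'] at hk
        have heq : t * (|z| * (1 + γ^2)) = d := by
          rw [htdef]; exact div_mul_cancel₀ d (mul_pos ha hγ2).ne'
        have hz2 : |z|^2 = z^2 := sq_abs z
        nlinarith [mul_pos ht ha, mul_pos (mul_pos ht ha) hd, sq_nonneg t]
    -- now the trig part
    rw [Real.sin_arctan, Real.cos_arctan]
    set s := Real.sqrt (1 + γ^2) with hsdef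
    have hs2 : s^2 = 1 + γ^2 := Real.sq_sqrt hγ2.le
    have hspos : 0 < s := Real.sqrt_pos.mpr hγ2
    have hcs : (1/s) / (γ/s) = 1/γ := by
      field_simp
    rw [hcs, div_pow, hs2]
    rw [div_mul_eq_mul_div, le_div_iff₀ hγ2]
    rcases lt_trichotomy z 0 with h | h | h
    · rw [Real.sign_of_neg h]
      have hz' : -z ≤ γ * w := by rw [← abs_of_neg h]; exact habs
      have hγ' : γ * (1/γ) = 1 := mul_one_div_cancel hγ.ne'
      have hexp : γ^2 * (z + 1/γ * (-1) * w)^2 = (γ*z - w)^2 := by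
        field_simp; ring
      rw [hexp]
      nlinarith [mul_le_mul_of_nonneg_left hz' (by linarith : (0:ℝ) ≤ -z), sq_nonneg w]
    · simp [h]
    · rw [Real.sign_of_pos h]
      have hz' : z ≤ γ * w := by rw [← abs_of_pos h]; exact habs
      have hγ' : γ * (1/γ) = 1 := mul_one_div_cancel hγ.ne'
      have hexp : γ^2 * (z + 1/γ * 1 * w)^2 = (γ*z + w)^2 := by
        field_simp
      rw [hexp]
      nlinarith [mul_le_mul_of_nonneg_left hz' h.le, sq_nonneg w]
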